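/- Let a < b be real numbers and let f : [a,b] → [0,1] be a probability density function on [a,b] with cumulative distribution function F(x) = ∫_a^x f(t) dt, and suppose F is twice continuously differentiable on (a,b) with F' = f and f' ∈ L²[a,b]. Let E(X) = ∫_a^b t f(t) dt be the expectation, which satisfies E(X) = b − ∫_a^b F(t) dt. Then for all x ∈ [a, (a+b)/2], |(F(x) + F(a+b−x))/2 − (b − E(X))/(b − a)| ≤ ((b−a)^{1/2}/π) · [ (b−a)²/48 + (x − (3a+b)/4)² ]^{1/2} · ‖f'‖₂. -/

import Mathlib

open MeasureTheory Set intervalIntegral Real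

/-!
Let `m = (a + b) / 2` and let `P` be the continuous kernel equal to `(t - a)² / 2` on `[a, x]`,
to `(t - b)² / 2` on `[a + b - x, b]`, and to a parabola with vertex at `m` in between. Since
`P(a) = P(b) = 0` and `P'' = 1` on each piece, while `P'` drops by `(b - a) / 2` at `x` and at
`a + b - x`, integrating by parts twice on each piece gives
`∫ P f' = ∫ F - (b - a) / 2 * (F x + F (a + b - x))`; together with `b - E = ∫ F` the left-hand
side is `|∫ P f'| / (b - a)`. Cauchy–Schwarz bounds this by `‖P‖₂ ‖f'‖₂ / (b - a)`, and `‖P‖₂²` is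
an explicit quintic in `x - a` and `m - x` which, as `π² < 9.87`, is at most
`(b - a)³ ((b - a)² / 48 + (x - (3a + b) / 4)²) / π²`. The density may jump at `a` and `b`, so the
integrations by parts use its continuous extension from `(a, b)` to `[a, b]`.
-/

theorem abs_integral_mul_le_sqrt_mul_sqrt {α : Type*} [MeasurableSpace α] {μ : Measure α}
    {u v : α → ℝ} (hu : MemLp u 2 μ) (hv : MemLp v 2 μ) :
    |∫ t, u t * v t ∂μ| ≤ √(∫ t, u t ^ 2 ∂μ) * √(∫ t, v t ^ 2 ∂μ) := by
  have holder := integral_mul_norm_le_Lp_mul_Lq (μ := μ) HolderConjugate.two_two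
    (by simpa using hu) (by simpa using hv)
  simp only [norm_eq_abs, rpow_two, sq_abs, ← sqrt_eq_rpow] at holder
  calc |∫ t, u t * v t ∂μ| ≤ ∫ t, |u t| * |v t| ∂μ := by
        simpa only [abs_mul] using
          MeasureTheory.abs_integral_le_integral_abs (f := fun t => u t * v t)
    _ ≤ _ := holder

theorem exists_continuousOn_Icc_eqOn_Ioo_of_hasDerivAt {f f' : ℝ → ℝ} {a b : ℝ} (hab : a < b)
    (hf : ∀ t ∈ Ioo a b, HasDerivAt f (f' t) t) (hf' : IntervalIntegrable f' volume a b) :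
    ∃ g : ℝ → ℝ, ContinuousOn g (Icc a b) ∧ EqOn g f (Ioo a b) ∧
      ∀ t ∈ Ioo a b, HasDerivAt g (f' t) t := by
  obtain ⟨m, hm⟩ := nonempty_Ioo.2 hab
  have hgf : EqOn (fun t => f m + ∫ s in m..t, f' s) f (Ioo a b) := fun t ht => by
    dsimp only
    have hsub : uIcc m t ⊆ Ioo a b := ordConnected_Ioo.uIcc_subset hm ht
    rw [integral_eq_sub_of_hasDerivAt (fun s hs => hf s (hsub hs))
      (hf'.mono_set (by rw [uIcc_of_le hab.le]; exact hsub.trans Ioo_subset_Icc_self))]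
    ring
  refine ⟨_, ?_, hgf, fun t ht => (hf t ht).congr_of_eventuallyEq ?_⟩
  · have hprim := continuousOn_primitive_interval' hf'
      (by rw [uIcc_of_le hab.le]; exact Ioo_subset_Icc_self hm)
    rw [uIcc_of_le hab.le] at hprim
    exact continuousOn_const.add hprim
  · exact Filter.eventuallyEq_of_mem (isOpen_Ioo.mem_nhds ht) hgf

theorem integral_sub_mul_eq_of_hasDerivAt {F g : ℝ → ℝ} {c d : ℝ} (e : ℝ) (hcd : c ≤ d)
    (hF : ContinuousOn F (Icc c d)) (hFg : ∀ t ∈ Ioo c d, HasDerivAt F (g t) t)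
    (hg : IntervalIntegrable g volume c d) :
    ∫ t in c..d, (t - e) * g t = (d - e) * F d - (c - e) * F c - ∫ t in c..d, F t := by
  simpa using integral_mul_deriv_eq_deriv_mul_of_hasDerivAt (u' := fun _ => 1)
    (continuous_sub_right e).continuousOn (by rwa [uIcc_of_le hcd])
    (fun t _ => (hasDerivAt_id t).sub_const e)
    (by rwa [min_eq_left hcd, max_eq_right hcd]) intervalIntegrable_const hg

theorem integral_quadratic_mul_eq_of_hasDerivAt {F g g' : ℝ → ℝ} {c d : ℝ} (e k : ℝ) (hcd : c ≤ d)
    (hF : ContinuousOn F (Icc c d)) (hFg : ∀ t ∈ Ioo c d, HasDerivAt F (g t) t)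
    (hg : ContinuousOn g (Icc c d)) (hgg' : ∀ t ∈ Ioo c d, HasDerivAt g (g' t) t)
    (hg' : IntervalIntegrable g' volume c d) :
    ∫ t in c..d, ((t - e) ^ 2 + k) / 2 * g' t
      = ((d - e) ^ 2 + k) / 2 * g d - ((c - e) ^ 2 + k) / 2 * g c
        - ((d - e) * F d - (c - e) * F c) + ∫ t in c..d, F t := by
  have hu : ∀ t, HasDerivAt (fun t => ((t - e) ^ 2 + k) / 2) (t - e) t := fun t => by
    simpa using ((((hasDerivAt_id t).sub_const e).pow 2).add_const k).div_const 2
  rw [integral_mul_deriv_eq_deriv_mul_of_hasDerivAt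
    (fun t _ => (hu t).continuousAt.continuousWithinAt)
    (by rwa [uIcc_of_le hcd]) (fun t _ => hu t) (by rwa [min_eq_left hcd, max_eq_right hcd])
    ((continuous_sub_right e).intervalIntegrable c d) hg',
    integral_sub_mul_eq_of_hasDerivAt e hcd hF hFg (hg.intervalIntegrable_of_Icc hcd)]
  ring

theorem integral_quadratic_sq (c d e k : ℝ) :
    ∫ t in c..d, (((t - e) ^ 2 + k) / 2) ^ 2
      = ((d - e) ^ 5 / 5 + 2 * k * (d - e) ^ 3 / 3 + k ^ 2 * (d - e)) / 4
        - ((c - e) ^ 5 / 5 + 2 * k * (c - e) ^ 3 / 3 + k ^ 2 * (c - e)) / 4 := by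
  refine integral_eq_sub_of_hasDerivAt
    (f := fun t => ((t - e) ^ 5 / 5 + 2 * k * (t - e) ^ 3 / 3 + k ^ 2 * (t - e)) / 4)
    (fun t _ => ?_) (Continuous.intervalIntegrable
      (by fun_prop : Continuous fun t : ℝ => (((t - e) ^ 2 + k) / 2) ^ 2) _ _)
  have hs : HasDerivAt (fun t : ℝ => t - e) 1 t := (hasDerivAt_id' t).sub_const e
  refine ((((hs.pow 5).div_const 5).add (((hs.pow 3).const_mul (2 * k)).div_const 3)).add
    (hs.const_mul (k ^ 2))).div_const 4 |>.congr_deriv ?_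
  ring

theorem intervalIntegral_eq_add_add_of_eqOn_Ioo {φ φ₁ φ₂ φ₃ : ℝ → ℝ} {a x y b : ℝ}
    (hax : a ≤ x) (hxy : x ≤ y) (hyb : y ≤ b) (hφ : IntervalIntegrable φ volume a b)
    (h₁ : EqOn φ φ₁ (Ioo a x)) (h₂ : EqOn φ φ₂ (Ioo x y)) (h₃ : EqOn φ φ₃ (Ioo y b)) :
    ∫ t in a..b, φ t = (∫ t in a..x, φ₁ t) + (∫ t in x..y, φ₂ t) + ∫ t in y..b, φ₃ t := by
  have hint : ∀ c d, a ≤ c → c ≤ d → d ≤ b → IntervalIntegrable φ volume c d :=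
    fun c d hac hcd hdb => hφ.mono_set <| by
      rw [uIcc_of_le hcd, uIcc_of_le (hac.trans (hcd.trans hdb))]; exact Icc_subset_Icc hac hdb
  have hcongr : ∀ {c d : ℝ} {ψ : ℝ → ℝ}, c ≤ d → EqOn φ ψ (Ioo c d) →
      ∫ t in c..d, φ t = ∫ t in c..d, ψ t := fun hcd h =>
    integral_congr_uIoo (by rwa [uIoo_of_le hcd])
  rw [← integral_add_adjacent_intervals (hint a y le_rfl (hxy.trans' hax) hyb)
      (hint y b (hax.trans hxy) hyb le_rfl),
    ← integral_add_adjacent_intervals (hint a x le_rfl hax (hxy.trans hyb)) (hint x y hax hxy hyb),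
    hcongr hax h₁, hcongr hxy h₂, hcongr hyb h₃]

theorem memLp_two_restrict_Ioc_of_continuousOn_Ioo {φ : ℝ → ℝ} {a b : ℝ} (hab : a ≤ b)
    (hφ : ContinuousOn φ (Ioo a b)) (hφ2 : IntervalIntegrable (fun t => φ t ^ 2) volume a b) :
    MemLp φ 2 (volume.restrict (Ioc a b)) := by
  refine (memLp_two_iff_integrable_sq ?_).2
    ((intervalIntegrable_iff_integrableOn_Ioc_of_le hab).1 hφ2)
  rw [← Measure.restrict_congr_set Ioo_ae_eq_Ioc]
  exact hφ.aestronglyMeasurable measurableSet_Ioo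

/-- The middle constant makes the kernel continuous at `x` and at `a + b - x`. -/
noncomputable def companionKernel (a b x t : ℝ) : ℝ :=
  if t ≤ x then (t - a) ^ 2 / 2
  else if t ≤ a + b - x then ((t - (a + b) / 2) ^ 2 + ((x - a) ^ 2 - (x - (a + b) / 2) ^ 2)) / 2
  else (t - b) ^ 2 / 2

section companionKernel

variable {a b x t : ℝ}

theorem companionKernel_of_le (ht : t ≤ x) : companionKernel a b x t = (t - a) ^ 2 / 2 :=
  if_pos ht

theorem companionKernel_of_mem_Ioc (ht : t ∈ Ioc x (a + b - x)) :
    companionKernel a b x t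
      = ((t - (a + b) / 2) ^ 2 + ((x - a) ^ 2 - (x - (a + b) / 2) ^ 2)) / 2 := by
  rw [companionKernel, if_neg ht.1.not_ge, if_pos ht.2]

theorem companionKernel_of_lt (hx : x ≤ (a + b) / 2) (ht : a + b - x < t) :
    companionKernel a b x t = (t - b) ^ 2 / 2 := by
  rw [companionKernel, if_neg (by linarith), if_neg ht.not_ge]

theorem continuous_companionKernel (hx : x ≤ (a + b) / 2) : Continuous (companionKernel a b x) := by
  refine Continuous.if_le (by fun_prop) (Continuous.if_le (by fun_prop) (by fun_prop) continuous_id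
    continuous_const fun t ht => ?_) continuous_id continuous_const fun t ht => ?_
  · rw [ht]; ring
  · rw [ht, if_pos (by linarith)]; ring

theorem integral_companionKernel_sq (hax : a ≤ x) (hx : x ≤ (a + b) / 2) :
    ∫ t in a..b, companionKernel a b x t ^ 2
      = (x - a) ^ 5 / 10 + ((a + b) / 2 - x) ^ 5 / 10
        + ((x - a) ^ 2 - ((a + b) / 2 - x) ^ 2) * ((a + b) / 2 - x) ^ 3 / 3
        + ((x - a) ^ 2 - ((a + b) / 2 - x) ^ 2) ^ 2 * ((a + b) / 2 - x) / 2 := by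
  rw [intervalIntegral_eq_add_add_of_eqOn_Ioo (φ := fun t => companionKernel a b x t ^ 2)
    (x := x) (y := a + b - x) (φ₁ := fun t => (((t - a) ^ 2 + 0) / 2) ^ 2)
    (φ₂ := fun t => (((t - (a + b) / 2) ^ 2 + ((x - a) ^ 2 - (x - (a + b) / 2) ^ 2)) / 2) ^ 2)
    (φ₃ := fun t => (((t - b) ^ 2 + 0) / 2) ^ 2) hax (by linarith) (by linarith)
    ((continuous_companionKernel hx).pow 2 |>.intervalIntegrable a b)
    (fun t ht => by simp [companionKernel_of_le ht.2.le])
    (fun t ht => by simp [companionKernel_of_mem_Ioc (Ioo_subset_Ioc_self ht)])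
    (fun t ht => by simp [companionKernel_of_lt hx ht.1]),
    integral_quadratic_sq, integral_quadratic_sq, integral_quadratic_sq]
  ring

theorem pi_sq_mul_integral_companionKernel_sq_le (hax : a ≤ x) (hx : x ≤ (a + b) / 2) :
    π ^ 2 * ∫ t in a..b, companionKernel a b x t ^ 2
      ≤ (b - a) ^ 3 * ((b - a) ^ 2 / 48 + (x - (3 * a + b) / 4) ^ 2) := by
  have hpi : π ^ 2 ≤ 987 / 100 := by nlinarith [pi_lt_d6, pi_pos]
  have hnonneg : 0 ≤ ∫ t in a..b, companionKernel a b x t ^ 2 :=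
    integral_nonneg (by linarith) fun t _ => sq_nonneg _
  have hu : 0 ≤ x - a := by linarith
  have hw : 0 ≤ (a + b) / 2 - x := by linarith
  set u := x - a
  set w := (a + b) / 2 - x
  have hquintic : 987 / 100 * (u ^ 5 / 10 + w ^ 5 / 10 + (u ^ 2 - w ^ 2) * w ^ 3 / 3
      + (u ^ 2 - w ^ 2) ^ 2 * w / 2)
      ≤ (2 * (u + w)) ^ 3 * ((2 * (u + w)) ^ 2 / 48 + ((u - w) / 2) ^ 2) := by
    nlinarith [sq_nonneg (u - w), sq_nonneg (u + w), mul_nonneg hu hw, sq_nonneg (u * w),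
      mul_nonneg (mul_nonneg hu hu) hw, mul_nonneg (mul_nonneg hw hw) hu,
      mul_nonneg (mul_nonneg (mul_nonneg hu hu) hu) hw]
  calc π ^ 2 * ∫ t in a..b, companionKernel a b x t ^ 2
      ≤ 987 / 100 * ∫ t in a..b, companionKernel a b x t ^ 2 := by gcongr
    _ ≤ (2 * (u + w)) ^ 3 * ((2 * (u + w)) ^ 2 / 48 + ((u - w) / 2) ^ 2) := by
      rwa [integral_companionKernel_sq hax hx]
    _ = (b - a) ^ 3 * ((b - a) ^ 2 / 48 + (x - (3 * a + b) / 4) ^ 2) := by ring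

theorem sqrt_integral_companionKernel_sq_le (hax : a ≤ x) (hx : x ≤ (a + b) / 2) :
    √(∫ t in a..b, companionKernel a b x t ^ 2)
      ≤ (b - a) * (√(b - a) / π * √((b - a) ^ 2 / 48 + (x - (3 * a + b) / 4) ^ 2)) := by
  have hba : 0 ≤ b - a := by linarith
  calc √(∫ t in a..b, companionKernel a b x t ^ 2)
      ≤ √((b - a) ^ 2 * ((b - a) * ((b - a) ^ 2 / 48 + (x - (3 * a + b) / 4) ^ 2)) / π ^ 2) := by
        refine sqrt_le_sqrt ((le_div_iff₀ (by positivity)).2 ?_)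
        linarith [pi_sq_mul_integral_companionKernel_sq_le hax hx]
    _ = _ := by
      rw [sqrt_div' _ (sq_nonneg π), sqrt_mul (sq_nonneg _), sqrt_mul hba, sqrt_sq hba,
        sqrt_sq pi_pos.le]
      ring

theorem abs_integral_companionKernel_mul_le {φ : ℝ → ℝ} (hax : a ≤ x) (hx : x ≤ (a + b) / 2)
    (hφ : MemLp φ 2 (volume.restrict (Ioc a b))) :
    |∫ t in a..b, companionKernel a b x t * φ t|
      ≤ (b - a) * (√(b - a) / π * √((b - a) ^ 2 / 48 + (x - (3 * a + b) / 4) ^ 2))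
        * √(∫ t in a..b, φ t ^ 2) := by
  have hab : a ≤ b := by linarith
  have hP := continuous_companionKernel hx (a := a) (b := b)
  have hcs : |∫ t in a..b, companionKernel a b x t * φ t|
      ≤ √(∫ t in a..b, companionKernel a b x t ^ 2) * √(∫ t in a..b, φ t ^ 2) := by
    simpa only [integral_of_le hab] using abs_integral_mul_le_sqrt_mul_sqrt
      ((memLp_two_iff_integrable_sq hP.aestronglyMeasurable).2 (hP.pow 2).integrableOn_Ioc) hφ
  exact hcs.trans (by gcongr; exact sqrt_integral_companionKernel_sq_le hax hx)

theorem integral_companionKernel_mul_eq {F g g' : ℝ → ℝ} (hax : a ≤ x) (hx : x ≤ (a + b) / 2)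
    (hF : ContinuousOn F (Icc a b)) (hFg : ∀ t ∈ Ioo a b, HasDerivAt F (g t) t)
    (hg : ContinuousOn g (Icc a b)) (hgg' : ∀ t ∈ Ioo a b, HasDerivAt g (g' t) t)
    (hg' : IntervalIntegrable g' volume a b) :
    ∫ t in a..b, companionKernel a b x t * g' t
      = (∫ t in a..b, F t) - (b - a) / 2 * (F x + F (a + b - x)) := by
  have hxy : x ≤ a + b - x := by linarith
  have hyb : a + b - x ≤ b := by linarith
  have piece := fun (c d e k : ℝ) (hac : a ≤ c) (hcd : c ≤ d) (hdb : d ≤ b) =>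
    integral_quadratic_mul_eq_of_hasDerivAt e k hcd (hF.mono (Icc_subset_Icc hac hdb))
      (fun t ht => hFg t (Ioo_subset_Ioo hac hdb ht)) (hg.mono (Icc_subset_Icc hac hdb))
      (fun t ht => hgg' t (Ioo_subset_Ioo hac hdb ht))
      (hg'.mono_set (by rw [uIcc_of_le hcd, uIcc_of_le (hac.trans (hcd.trans hdb))]
                        exact Icc_subset_Icc hac hdb))
  have hFint := fun (c d : ℝ) (hac : a ≤ c) (hcd : c ≤ d) (hdb : d ≤ b) =>
    (hF.mono (Icc_subset_Icc hac hdb)).intervalIntegrable_of_Icc (μ := volume) hcd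
  rw [intervalIntegral_eq_add_add_of_eqOn_Ioo (φ := fun t => companionKernel a b x t * g' t)
    (x := x) (y := a + b - x) (φ₁ := fun t => ((t - a) ^ 2 + 0) / 2 * g' t)
    (φ₂ := fun t => ((t - (a + b) / 2) ^ 2 + ((x - a) ^ 2 - (x - (a + b) / 2) ^ 2)) / 2 * g' t)
    (φ₃ := fun t => ((t - b) ^ 2 + 0) / 2 * g' t) hax hxy hyb
    (hg'.continuousOn_mul (continuous_companionKernel hx).continuousOn)
    (fun t ht => by simp [companionKernel_of_le ht.2.le])
    (fun t ht => by simp [companionKernel_of_mem_Ioc (Ioo_subset_Ioc_self ht)])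
    (fun t ht => by simp [companionKernel_of_lt hx ht.1]),
    piece a x a 0 le_rfl hax (hxy.trans hyb), piece x (a + b - x) _ _ hax hxy hyb,
    piece (a + b - x) b b 0 (hax.trans hxy) hyb le_rfl,
    ← integral_add_adjacent_intervals (hFint a _ le_rfl (hax.trans hxy) hyb)
      (hFint _ b (hax.trans hxy) hyb le_rfl),
    ← integral_add_adjacent_intervals (hFint a x le_rfl hax (hxy.trans hyb))
      (hFint x _ hax hxy hyb)]
  ring

end companionKernel

theorem companion_ostrowski_pdf_second_deriv_L2_general
    (a b : ℝ) (hab : a < b) (f f' : ℝ → ℝ)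
    (hint : IntervalIntegrable f MeasureTheory.volume a b)
    (hone : (∫ t in a..b, f t) = 1)
    (F : ℝ → ℝ) (hF : ∀ y, F y = ∫ t in a..y, f t)
    (hFderiv : ∀ t ∈ Set.Ioo a b, HasDerivAt F (f t) t)
    (hfderiv : ∀ t ∈ Set.Ioo a b, HasDerivAt f (f' t) t)
    (hcont' : ContinuousOn f' (Set.Ioo a b))
    (hL2 : IntervalIntegrable (fun t => (f' t) ^ 2) MeasureTheory.volume a b)
    (E : ℝ) (hE : E = ∫ t in a..b, t * f t) :
    ∀ x ∈ Set.Icc a ((a + b) / 2),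
      |(F x + F (a + b - x)) / 2 - (b - E) / (b - a)|
        ≤ Real.sqrt (b - a) / Real.pi *
            Real.sqrt ((b - a) ^ 2 / 48 + (x - (3 * a + b) / 4) ^ 2) *
            Real.sqrt (∫ t in a..b, (f' t) ^ 2) := by
  rintro x ⟨hax, hx⟩
  have hba : 0 < b - a := sub_pos.2 hab
  have hF_cont : ContinuousOn F (Icc a b) := by
    have hprim := continuousOn_primitive_interval' hint left_mem_uIcc
    rw [uIcc_of_le hab.le] at hprim
    exact hprim.congr fun t _ => hF t
  have hf'_memLp := memLp_two_restrict_Ioc_of_continuousOn_Ioo hab.le hcont' hL2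
  have hf'_int : IntervalIntegrable f' volume a b :=
    (intervalIntegrable_iff_integrableOn_Ioc_of_le hab.le).2 (hf'_memLp.integrable one_le_two)
  obtain ⟨g, hg, hgf, hg'⟩ := exists_continuousOn_Icc_eqOn_Ioo_of_hasDerivAt hab hfderiv hf'_int
  have hmean : b - E = ∫ t in a..b, F t := by
    have hparts := integral_sub_mul_eq_of_hasDerivAt 0 hab.le hF_cont hFderiv hint
    simp only [sub_zero] at hparts
    rw [hE, hparts, hF a, hF b, hone, integral_same]
    ring
  have hrepr : (F x + F (a + b - x)) / 2 - (b - E) / (b - a)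
      = -(∫ t in a..b, companionKernel a b x t * f' t) / (b - a) := by
    rw [integral_companionKernel_mul_eq hax hx hF_cont
      (fun t ht => by rw [hgf ht]; exact hFderiv t ht) hg hg' hf'_int, hmean]
    field_simp
    ring
  rw [hrepr, abs_div, abs_neg, abs_of_pos hba, div_le_iff₀ hba]
  exact (abs_integral_companionKernel_mul_le hax hx hf'_memLp).trans_eq (by ring)

/-- **Application to probability density functions, `f' ∈ L²[a,b]`** (Theorem 4.2, inequality
(4.3)). Let `f : [a,b] → [0,1]` be a probability density (`∫_a^b f = 1`), `F x = ∫_a^x f`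
the cumulative distribution function, assumed twice continuously differentiable on `(a,b)`
with `F' = f`, `f` differentiable on `(a,b)` with continuous derivative `f'` which is
square-integrable on `[a,b]`. With `E = ∫_a^b t f(t) dt` the expectation, for all
`x ∈ [a, (a+b)/2]`,
`|(F x + F (a+b-x))/2 - (b - E)/(b - a)|
   ≤ (√(b-a)/π) · √((b-a)²/48 + (x - (3a+b)/4)²) · ‖f'‖₂`. -/
theorem companion_ostrowski_pdf_second_deriv_L2
    (a b : ℝ) (hab : a < b) (f f' : ℝ → ℝ)
    (hrange : ∀ t ∈ Set.Icc a b, f t ∈ Set.Icc (0 : ℝ) 1)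
    (hint : IntervalIntegrable f MeasureTheory.volume a b)
    (hone : (∫ t in a..b, f t) = 1)
    (F : ℝ → ℝ) (hF : ∀ y, F y = ∫ t in a..y, f t)
    (hFderiv : ∀ t ∈ Set.Ioo a b, HasDerivAt F (f t) t)
    (hfderiv : ∀ t ∈ Set.Ioo a b, HasDerivAt f (f' t) t)
    (hcont' : ContinuousOn f' (Set.Ioo a b))
    (hL2 : IntervalIntegrable (fun t => (f' t) ^ 2) MeasureTheory.volume a b)
    (E : ℝ) (hE : E = ∫ t in a..b, t * f t) :
    ∀ x ∈ Set.Icc a ((a + b) / 2),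
      |(F x + F (a + b - x)) / 2 - (b - E) / (b - a)|
        ≤ Real.sqrt (b - a) / Real.pi *
            Real.sqrt ((b - a) ^ 2 / 48 + (x - (3 * a + b) / 4) ^ 2) *
            Real.sqrt (∫ t in a..b, (f' t) ^ 2) :=
  companion_ostrowski_pdf_second_deriv_L2_general a b hab f f' hint hone F hF hFderiv hfderiv hcont'
    hL2 E hE
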